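/- Let S be a Polish space, μ and μₙ Borel probability measures on S with μₙ converging weakly to μ. Let f, fₙ : S → ℝ be continuous with fₙ → f uniformly on compact subsets of S. Assume sup_n ∫ |fₙ| dμₙ < ∞ and lim_{α→∞} sup_n ∫ |fₙ|·1_{|fₙ| ≥ α} dμₙ = 0 (uniform integrability of the fₙ with respect to μₙ). Then ∫ fₙ dμₙ → ∫ f dμ. -/

import Mathlib

open MeasureTheory Filter Topology Set
open scoped BoundedContinuousFunction

/-!
Clip at level `α`, `clip α y = max (min y α) (-α)`. Uniform integrability makes `∫ fₙ dμₙ`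
uniformly close to `∫ clip α ∘ fₙ dμₙ` once `α` is large, and `∫ clip α ∘ f dμ → ∫ f dμ` by
dominated convergence. For fixed `α`, a weakly convergent sequence on a Polish space is tight,
so most of the mass of every `μₙ` sits on one compact set, where `clip α ∘ fₙ → clip α ∘ f`
uniformly, while off it both are bounded by `α`; together with weak convergence this gives
`∫ clip α ∘ fₙ dμₙ → ∫ clip α ∘ f dμ`. The same argument for `|clip j|` bounds `∫ |clip j ∘ f| dμ`
by `supₙ ∫ |fₙ| dμₙ`, which makes `f` integrable by Fatou. The two limits then commute
(Moore–Osgood).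
-/

noncomputable def clip (α : ℝ) : ℝ →ᵇ ℝ :=
  BoundedContinuousFunction.ofNormedAddCommGroup (fun y => max (min y α) (-α))
    ((continuous_id.min continuous_const).max continuous_const) |α| fun y => by
      rw [Real.norm_eq_abs, abs_le]
      exact ⟨(neg_le_neg (le_abs_self α)).trans (le_max_right _ _),
        max_le ((min_le_right _ _).trans (le_abs_self α)) (neg_le_abs α)⟩

@[simp] lemma clip_apply (α y : ℝ) : clip α y = max (min y α) (-α) := rfl

lemma lipschitzWith_clip (α : ℝ) : LipschitzWith 1 (clip α) :=
  (LipschitzWith.id.min_const α).max_const (-α)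

lemma clip_of_abs_le {α y : ℝ} (h : |y| ≤ α) : clip α y = y := by
  rw [abs_le] at h
  rw [clip_apply, min_eq_left h.2, max_eq_left h.1]

lemma abs_clip_le_abs {α : ℝ} (hα : 0 ≤ α) (y : ℝ) : |clip α y| ≤ |y| := by
  simp only [clip_apply]
  rcases abs_cases y with ⟨h, _⟩ | ⟨h, _⟩ <;> rw [abs_le] <;> constructor <;> grind

lemma abs_sub_clip_le {α : ℝ} (hα : 0 ≤ α) (y : ℝ) :
    |y - clip α y| ≤ if α ≤ |y| then |y| else 0 := by
  split_ifs with h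
  · simp only [clip_apply]
    rcases abs_cases y with ⟨h, _⟩ | ⟨h, _⟩ <;> rw [abs_le] <;> constructor <;> grind
  · rw [clip_of_abs_le (not_le.1 h).le, sub_self, abs_zero]

lemma tendsto_clip_atTop (y : ℝ) : Tendsto (fun α => clip α y) atTop (𝓝 y) :=
  tendsto_const_nhds.congr' <|
    (eventually_ge_atTop |y|).mono fun _ h => (clip_of_abs_le h).symm

section Integral

variable {X : Type*} [MeasurableSpace X] {μ : Measure X} {f : X → ℝ}

lemma MeasureTheory.Integrable.clip (hf : Integrable f μ) {α : ℝ} (hα : 0 ≤ α) :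
    Integrable (fun x => _root_.clip α (f x)) μ :=
  hf.abs.mono' ((_root_.clip α).continuous.comp_aestronglyMeasurable hf.1)
    (ae_of_all _ fun x => abs_clip_le_abs hα (f x))

theorem tendsto_integral_clip_atTop (hf : Integrable f μ) :
    Tendsto (fun α => ∫ x, clip α (f x) ∂μ) atTop (𝓝 (∫ x, f x ∂μ)) :=
  tendsto_integral_filter_of_dominated_convergence (fun x => |f x|)
    (Eventually.of_forall fun α => (clip α).continuous.comp_aestronglyMeasurable hf.1)
    ((eventually_ge_atTop 0).mono fun _ hα => ae_of_all _ fun x => abs_clip_le_abs hα (f x))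
    hf.abs (ae_of_all _ fun x => tendsto_clip_atTop (f x))

theorem abs_integral_sub_integral_clip_le (hf : Integrable f μ) {α : ℝ} (hα : 0 ≤ α) :
    |∫ x, f x ∂μ - ∫ x, clip α (f x) ∂μ| ≤ ∫ x, (if α ≤ |f x| then |f x| else 0) ∂μ := by
  have htail : Integrable (fun x => if α ≤ |f x| then |f x| else 0) μ := by
    refine hf.abs.mono' ?_ (ae_of_all _ fun x => ?_)
    · exact ((Measurable.ite (measurableSet_le measurable_const measurable_id.abs)
        measurable_id.abs measurable_const).comp_aemeasurable hf.aemeasurable).aestronglyMeasurable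
    · split_ifs <;> simp
  rw [← integral_sub hf (hf.clip hα)]
  exact abs_integral_le_integral_abs.trans <| integral_mono_of_nonneg
    (ae_of_all _ fun _ => abs_nonneg _) htail (ae_of_all _ fun x => abs_sub_clip_le hα (f x))

theorem integrable_of_integral_abs_clip_le [IsFiniteMeasure μ] (hf : AEStronglyMeasurable f μ)
    {M : ℝ} (hM : ∀ j : ℕ, ∫ x, |clip j (f x)| ∂μ ≤ M) : Integrable f μ := by
  have hclip (j : ℕ) : Integrable (fun x => clip j (f x)) μ :=
    .of_bound ((clip j).continuous.comp_aestronglyMeasurable hf) _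
      (ae_of_all _ fun x => (clip j).norm_coe_le_norm (f x))
  have hlim : eLpNorm f 1 μ ≤ ENNReal.ofReal M := by
    refine Lp.eLpNorm_le_of_ae_tendsto (Eventually.of_forall fun j => ?_) (fun j => (hclip j).1)
      (ae_of_all _ fun x => (tendsto_clip_atTop (f x)).comp tendsto_natCast_atTop_atTop)
    rw [eLpNorm_one_eq_lintegral_enorm, ← ofReal_integral_norm_eq_lintegral_enorm (hclip j)]
    exact ENNReal.ofReal_le_ofReal (hM j)
  exact memLp_one_iff_integrable.1 ⟨hf, hlim.trans_lt ENNReal.ofReal_lt_top⟩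

theorem tendstoUniformly_integral_clip {ι : Type*} {ν : ι → Measure X} {g : ι → X → ℝ}
    (hg : ∀ i, Integrable (g i) (ν i))
    (htail : ∀ δ > (0 : ℝ), ∃ α₀ : ℝ, ∀ α ≥ α₀, ∀ i,
      ∫ x, (if α ≤ |g i x| then |g i x| else 0) ∂ν i ≤ δ) :
    TendstoUniformly (fun α i => ∫ x, clip α (g i x) ∂ν i) (fun i => ∫ x, g i x ∂ν i) atTop := by
  rw [Metric.tendstoUniformly_iff]
  intro ε hε
  obtain ⟨α₀, hα₀⟩ := htail (ε / 2) (half_pos hε)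
  filter_upwards [eventually_ge_atTop (max α₀ 0)] with α hα i
  rw [Real.dist_eq]
  exact (abs_integral_sub_integral_clip_le (hg i) (le_of_max_le_right hα)).trans_lt
    ((hα₀ α (le_of_max_le_left hα) i).trans_lt (half_lt_self hε))

end Integral

theorem isTightMeasureSet_range_of_tendsto {X : Type*} [PseudoMetricSpace X] [CompleteSpace X]
    [SecondCountableTopology X] [MeasurableSpace X] [OpensMeasurableSpace X]
    {P : ℕ → ProbabilityMeasure X} {Q : ProbabilityMeasure X} (hP : Tendsto P atTop (𝓝 Q)) :
    IsTightMeasureSet (range fun n => (P n : Measure X)) :=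
  (isTightMeasureSet_of_isCompact_closure hP.isCompact_insert_range.closure).subset <| by
    rintro _ ⟨n, rfl⟩
    exact ⟨P n, mem_insert_of_mem _ (mem_range_self n), rfl⟩

section Tight

variable {X : Type*} [TopologicalSpace X] [T2Space X] [MeasurableSpace X]
  [OpensMeasurableSpace X] {ν : ℕ → Measure X} [∀ n, IsProbabilityMeasure (ν n)]

theorem tendsto_integral_abs_sub_of_isTightMeasureSet (hν : IsTightMeasureSet (range ν))
    {g : ℕ → X →ᵇ ℝ} {g₀ : X →ᵇ ℝ} {C : ℝ} (hgC : ∀ n, ‖g n‖ ≤ C) (hg₀C : ‖g₀‖ ≤ C)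
    (hunif : ∀ K, IsCompact K → TendstoUniformlyOn (fun n => ⇑(g n)) g₀ atTop K) :
    Tendsto (fun n => ∫ x, |g n x - g₀ x| ∂ν n) atTop (𝓝 0) := by
  have hC : 0 ≤ C := (norm_nonneg _).trans hg₀C
  rw [Metric.tendsto_atTop]
  intro ε hε
  -- chosen so that `ε / 2 + 2 * C * δ < ε`
  set δ := ε / (4 * C + 1) with hδ
  have hδε : (4 * C + 1) * δ = ε := by rw [hδ]; field_simp
  have hδ0 : 0 < δ := by positivity
  obtain ⟨K, hK, hKν⟩ := isTightMeasureSet_iff_exists_isCompact_measure_compl_le.1 hν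
    (ENNReal.ofReal δ) (ENNReal.ofReal_pos.2 hδ0)
  obtain ⟨N, hN⟩ := (Metric.tendstoUniformlyOn_iff.1 (hunif K hK) (ε / 2)
    (half_pos hε)).exists_forall_of_atTop
  refine ⟨N, fun n hn => ?_⟩
  have hpointwise (x : X) : |g n x - g₀ x| ≤ ε / 2 + Kᶜ.indicator (fun _ => 2 * C) x := by
    by_cases hx : x ∈ K
    · rw [indicator_of_notMem (notMem_compl_iff.2 hx), add_zero, abs_sub_comm]
      exact (hN n hn x hx).le
    · have hgn : |g n x| ≤ C := ((g n).norm_coe_le_norm x).trans (hgC n)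
      have hg₀ : |g₀ x| ≤ C := (g₀.norm_coe_le_norm x).trans hg₀C
      rw [indicator_of_mem hx]
      linarith [abs_sub (g n x) (g₀ x)]
  have hKc : (ν n).real Kᶜ ≤ δ := ENNReal.toReal_le_of_le_ofReal hδ0.le (hKν _ (mem_range_self n))
  have hint : ∫ x, |g n x - g₀ x| ∂ν n ≤ ε / 2 + (ν n).real Kᶜ * (2 * C) := by
    calc ∫ x, |g n x - g₀ x| ∂ν n ≤ ∫ x, (ε / 2 + Kᶜ.indicator (fun _ => 2 * C) x) ∂ν n :=
          integral_mono ((g n - g₀).integrable _).abs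
            ((integrable_const _).add ((integrable_const _).indicator hK.measurableSet.compl))
            hpointwise
      _ = ε / 2 + (ν n).real Kᶜ * (2 * C) := by
          rw [integral_add (integrable_const _)
            ((integrable_const _).indicator hK.measurableSet.compl), integral_const,
            integral_indicator_const _ hK.measurableSet.compl]
          simp
  have hKcC : (ν n).real Kᶜ * (2 * C) ≤ δ * (2 * C) := by gcongr
  rw [Real.dist_eq, sub_zero, abs_of_nonneg (integral_nonneg fun _ => abs_nonneg _)]
  linarith

theorem tendsto_integral_comp_of_isTightMeasureSet (hν : IsTightMeasureSet (range ν))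
    {ν₀ : Measure X} (hweak : ∀ g : X →ᵇ ℝ,
      Tendsto (fun n => ∫ x, g x ∂ν n) atTop (𝓝 (∫ x, g x ∂ν₀)))
    {f : ℕ → X → ℝ} {f₀ : X → ℝ} (hf : ∀ n, Continuous (f n)) (hf₀ : Continuous f₀)
    (hunif : ∀ K, IsCompact K → TendstoUniformlyOn f f₀ atTop K)
    (φ : ℝ →ᵇ ℝ) (hφ : UniformContinuous φ) :
    Tendsto (fun n => ∫ x, φ (f n x) ∂ν n) atTop (𝓝 (∫ x, φ (f₀ x) ∂ν₀)) := by
  let g (n : ℕ) : X →ᵇ ℝ := φ.compContinuous ⟨f n, hf n⟩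
  let g₀ : X →ᵇ ℝ := φ.compContinuous ⟨f₀, hf₀⟩
  have hdiff : Tendsto (fun n => ∫ x, |g n x - g₀ x| ∂ν n) atTop (𝓝 0) :=
    tendsto_integral_abs_sub_of_isTightMeasureSet hν (fun n => φ.norm_compContinuous_le _)
      (φ.norm_compContinuous_le _) fun K hK => hφ.comp_tendstoUniformlyOn (hunif K hK)
  refine (hweak g₀).congr_dist (squeeze_zero (fun _ => dist_nonneg) (fun n => ?_) hdiff)
  change |∫ x, g₀ x ∂ν n - ∫ x, g n x ∂ν n| ≤ _
  rw [← integral_sub (g₀.integrable _) ((g n).integrable _)]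
  exact abs_integral_le_integral_abs.trans_eq (by simp_rw [abs_sub_comm])

end Tight

theorem tendsto_integral_of_weak_conv_unif_integrable
    {S : Type*} [MetricSpace S] [CompleteSpace S]
    [TopologicalSpace.SeparableSpace S] [MeasurableSpace S] [BorelSpace S]
    (μ : Measure S) (μs : ℕ → Measure S)
    [IsProbabilityMeasure μ] (hprob : ∀ n, IsProbabilityMeasure (μs n))
    (hweak : ∀ g : BoundedContinuousFunction S ℝ,
      Tendsto (fun n => ∫ x, g x ∂(μs n)) atTop (nhds (∫ x, g x ∂μ)))
    (f : S → ℝ) (fs : ℕ → S → ℝ)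
    (hf : Continuous f) (hfs : ∀ n, Continuous (fs n))
    (hunif : ∀ K : Set S, IsCompact K →
      TendstoUniformlyOn (fun n x => fs n x) f atTop K)
    (hintegrable : ∀ n, Integrable (fs n) (μs n))
    (hsup : ∃ M : ℝ, ∀ n, ∫ x, |fs n x| ∂(μs n) ≤ M)
    (htail : ∀ δ > (0 : ℝ), ∃ α₀ : ℝ, ∀ α ≥ α₀, ∀ n,
      ∫ x, (if α ≤ |fs n x| then |fs n x| else 0) ∂(μs n) ≤ δ) :
    Tendsto (fun n => ∫ x, fs n x ∂(μs n)) atTop (nhds (∫ x, f x ∂μ)) := by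
  have := hprob
  obtain ⟨M, hM⟩ := hsup
  have hν : IsTightMeasureSet (range μs) := isTightMeasureSet_range_of_tendsto
    (P := fun n => ⟨μs n, hprob n⟩) (Q := ⟨μ, ‹_›⟩)
    (ProbabilityMeasure.tendsto_iff_forall_integral_tendsto.2 hweak)
  have hconv (φ : ℝ →ᵇ ℝ) (hφ : UniformContinuous φ) :
      Tendsto (fun n => ∫ x, φ (fs n x) ∂μs n) atTop (𝓝 (∫ x, φ (f x) ∂μ)) :=
    tendsto_integral_comp_of_isTightMeasureSet hν hweak hfs hf hunif φ hφ
  have hfint : Integrable f μ := by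
    refine integrable_of_integral_abs_clip_le hf.aestronglyMeasurable (M := M) fun j => ?_
    refine le_of_tendsto' (hconv |clip j| ?_) fun n => ?_
    · exact (lipschitzWith_one_norm.comp (lipschitzWith_clip j)).uniformContinuous
    · calc ∫ x, |clip j| (fs n x) ∂μs n ≤ ∫ x, |fs n x| ∂μs n :=
            integral_mono_of_nonneg (ae_of_all _ fun _ => abs_nonneg _) (hintegrable n).abs
              (ae_of_all _ fun x => abs_clip_le_abs j.cast_nonneg (fs n x))
        _ ≤ M := hM n
  exact (tendstoUniformly_integral_clip hintegrable htail).tendsto_of_eventually_tendsto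
    (Eventually.of_forall fun α => hconv (clip α) (lipschitzWith_clip α).uniformContinuous)
    (tendsto_integral_clip_atTop hfint)
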